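/- Let q = 1 + (α+β)γ (the specialization δ = −γ of q = 1+βγ−αδ), and for each i set p_i := (1 − z_i)/(1 + (β/α) z_i). Then for any i ≠ j one has 1 + (α + β p_j)(γ − γ p_i)/(p_j − p_i) = (q z_i − z_j)/(z_i − z_j). -/

import Mathlib

/-!
Writing `p(z) = α(1 - z)/(α + βz)`, each factor on the left-hand side is a simple fraction in `z`:
`α + β p(z_j) = α(α + β)/(α + βz_j)`, `1 - p(z_i) = (α + β)z_i/(α + βz_i)` and
`p(z_j) - p(z_i) = α(α + β)(z_i - z_j)/((α + βz_i)(α + βz_j))`. The denominators `α + βz` cancel,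
and the quotient collapses to `(α + β)γ z_i/(z_i - z_j)`, so adding `1` gives `(q z_i - z_j)/(z_i - z_j)`.
The identity thus holds in every field, as soon as `α`, `α + βz_i`, `α + βz_j` and `z_i - z_j`
are nonzero, which is the case for indeterminates. When `α + β = 0` both sides equal `1`, the left
one through the convention `x / 0 = 0`.
-/

noncomputable section

/-- the field of rational functions over ℚ in indeterminates α, β, γ, z_i, z_j -/
abbrev K5 : Type := FractionRing (MvPolynomial (Fin 5) ℚ)

def av : K5 := algebraMap (MvPolynomial (Fin 5) ℚ) K5 (MvPolynomial.X 0)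
def bv : K5 := algebraMap (MvPolynomial (Fin 5) ℚ) K5 (MvPolynomial.X 1)
def cv : K5 := algebraMap (MvPolynomial (Fin 5) ℚ) K5 (MvPolynomial.X 2)
def zi : K5 := algebraMap (MvPolynomial (Fin 5) ℚ) K5 (MvPolynomial.X 3)
def zj : K5 := algebraMap (MvPolynomial (Fin 5) ℚ) K5 (MvPolynomial.X 4)

/-- δ := −γ -/
def dv : K5 := -cv

/-- q := 1 + βγ − αδ = 1 + (α+β)γ -/
def qv : K5 := 1 + (av + bv) * cv

/-- p_i := (1 − z_i)/(1 + (β/α) z_i) -/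
def pi' : K5 := (1 - zi) / (1 + bv / av * zi)
/-- p_j := (1 − z_j)/(1 + (β/α) z_j) -/
def pj' : K5 := (1 - zj) / (1 + bv / av * zj)

section MoebiusParam

variable {K : Type*} [Field K] {a b c x y z : K}

def moebiusParam (a b z : K) : K := (1 - z) / (1 + b / a * z)

lemma moebiusParam_eq (ha : a ≠ 0) : moebiusParam a b z = a * (1 - z) / (a + b * z) := by
  rw [moebiusParam, ← mul_div_mul_left _ _ ha, mul_add, mul_one, ← mul_assoc, mul_div_cancel₀ _ ha]

lemma add_mul_moebiusParam (ha : a ≠ 0) (hz : a + b * z ≠ 0) :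
    a + b * moebiusParam a b z = a * (a + b) / (a + b * z) := by
  rw [moebiusParam_eq ha, eq_div_iff hz]
  field_simp
  ring

lemma one_sub_moebiusParam (ha : a ≠ 0) (hz : a + b * z ≠ 0) :
    1 - moebiusParam a b z = (a + b) * z / (a + b * z) := by
  rw [moebiusParam_eq ha, one_sub_div hz]
  ring

lemma moebiusParam_sub_moebiusParam (ha : a ≠ 0) (hx : a + b * x ≠ 0) (hy : a + b * y ≠ 0) :
    moebiusParam a b y - moebiusParam a b x =
      a * (a + b) * (x - y) / ((a + b * x) * (a + b * y)) := by
  rw [moebiusParam_eq ha, moebiusParam_eq ha, div_sub_div _ _ hy hx]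
  ring

theorem one_add_mul_div_moebiusParam_sub (ha : a ≠ 0) (hx : a + b * x ≠ 0)
    (hy : a + b * y ≠ 0) (hxy : x ≠ y) :
    1 + (a + b * moebiusParam a b y) * (c - c * moebiusParam a b x) /
        (moebiusParam a b y - moebiusParam a b x) =
      ((1 + (a + b) * c) * x - y) / (x - y) := by
  have hxy' : x - y ≠ 0 := sub_ne_zero.mpr hxy
  rw [← mul_one_sub, add_mul_moebiusParam ha hy, one_sub_moebiusParam ha hx,
    moebiusParam_sub_moebiusParam ha hx hy]
  field_simp
  ring

end MoebiusParam

lemma algebraMap_ne_zero_of_eval_ne_zero {σ R : Type*} [CommRing R] {p : MvPolynomial σ R}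
    (v : σ → R) (h : MvPolynomial.eval v p ≠ 0) :
    algebraMap (MvPolynomial σ R) (FractionRing (MvPolynomial σ R)) p ≠ 0 :=
  (map_ne_zero_iff _ (IsFractionRing.injective _ _)).mpr (by rintro rfl; exact h (map_zero _))

lemma av_ne_zero : av ≠ 0 := by
  simp [av]

lemma av_add_bv_mul_zi_ne_zero : av + bv * zi ≠ 0 := by
  rw [av, bv, zi, ← map_mul, ← map_add]
  exact algebraMap_ne_zero_of_eval_ne_zero (fun _ => (1 : ℚ)) (by simp)

lemma av_add_bv_mul_zj_ne_zero : av + bv * zj ≠ 0 := by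
  rw [av, bv, zj, ← map_mul, ← map_add]
  exact algebraMap_ne_zero_of_eval_ne_zero (fun _ => (1 : ℚ)) (by simp)

lemma zi_ne_zj : zi ≠ zj := by
  simp [zi, zj]

/-- 1 + (α + βp_j)(γ + δp_i)/(p_j − p_i) = (qz_i − z_j)/(z_i − z_j). -/
theorem stmt11 :
    1 + (av + bv * pj') * (cv + dv * pi') / (pj' - pi') =
      (qv * zi - zj) / (zi - zj) := by
  have hdv : cv + dv * pi' = cv - cv * pi' := by rw [dv, neg_mul, ← sub_eq_add_neg]
  rw [hdv, qv]
  exact one_add_mul_div_moebiusParam_sub av_ne_zero av_add_bv_mul_zi_ne_zero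
    av_add_bv_mul_zj_ne_zero zi_ne_zj

end
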